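/- arXiv:1407.1412 — 9 statements merged into one kernel-verified Lean document; each statement's English description precedes it below -/
import Mathlib

section
/- Let A be an n×n matrix over a commutative ring and let A₀ be the leading k×k submatrix of A (with 1 ≤ k ≤ n-1). For p, q ∈ {k+1, …, n}, define ĉ_{pq} as the determinant of the (k+1)×(k+1) matrix obtained by bordering A₀ with the row (a_{p1}, …, a_{pk}) at the bottom and the column (a_{1q}, …, a_{kq}) at the right, with a_{pq} in the corner. Let Ĉ = (ĉ_{pq}) be the resulting (n-k)×(n-k) matrix. Then (det A₀)^{n-k-1} · det A = det Ĉ. -/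
open Matrix

/-- Border index map: `i < k` maps into the leading block, otherwise to `p`. -/
def bidx {n : ℕ} (k : ℕ) (hk : k ≤ n) (p : Fin n) (i : Fin (k + 1)) : Fin n :=
  if h : (i : ℕ) < k then ⟨i, lt_of_lt_of_le h hk⟩ else p

/-- The bordered determinant `ĉ_{pq}`: the `(k+1)×(k+1)` determinant obtained by
bordering the leading `k×k` submatrix of `A` with row `p` and column `q`. -/
def cHat {R : Type*} [CommRing R] {n : ℕ} (A : Matrix (Fin n) (Fin n) R) (k : ℕ)
    (hk : k ≤ n) (p q : Fin n) : R :=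
  Matrix.det (Matrix.of fun i j : Fin (k + 1) => A (bidx k hk p i) (bidx k hk q j))

/-- Index of the `i`-th row/column after the leading block. -/
def cIdx {n k : ℕ} (hk : k ≤ n) (i : Fin (n - k)) : Fin n :=
  ⟨k + i, by have := i.isLt; omega⟩

/-- Sylvester identity over a field, assuming the leading block is nonsingular. -/
lemma sylvester_field {K : Type*} [Field K] {n k : ℕ}
    (hk1 : 1 ≤ k) (hk : k ≤ n) (hkn : k ≤ n - 1) (A : Matrix (Fin n) (Fin n) K)
    (h0 : Matrix.det (A.submatrix (Fin.castLE hk) (Fin.castLE hk)) ≠ 0) :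
    (Matrix.det (A.submatrix (Fin.castLE hk) (Fin.castLE hk))) ^ (n - k - 1) * A.det =
      Matrix.det (Matrix.of fun p q : Fin (n - k) =>
        cHat A k hk (cIdx hk p) (cIdx hk q)) := by
  set m := n - k with hm
  have hn : n = k + m := by omega
  have hm1 : 1 ≤ m := by omega
  set P : Matrix (Fin k) (Fin k) K := A.submatrix (Fin.castLE hk) (Fin.castLE hk) with hP
  set B : Matrix (Fin k) (Fin m) K :=
    Matrix.of fun i j => A (Fin.castLE hk i) (cIdx hk j) with hB
  set C : Matrix (Fin m) (Fin k) K :=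
    Matrix.of fun i j => A (cIdx hk i) (Fin.castLE hk j) with hC
  set D : Matrix (Fin m) (Fin m) K :=
    Matrix.of fun i j => A (cIdx hk i) (cIdx hk j) with hD
  haveI : Invertible P := P.invertibleOfIsUnitDet (isUnit_iff_ne_zero.mpr h0)
  -- the reindexing equivalence
  let σ : Fin k ⊕ Fin m ≃ Fin n := finSumFinEquiv.trans (finCongr hn.symm)
  have hσl : ∀ i : Fin k, σ (Sum.inl i) = Fin.castLE hk i := by
    intro i; apply Fin.ext; simp [σ]
  have hσr : ∀ j : Fin m, σ (Sum.inr j) = cIdx hk j := by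
    intro j; apply Fin.ext; simp [σ, cIdx]
  have hA : A.submatrix σ σ = Matrix.fromBlocks P B C D := by
    ext i j
    cases i with
    | inl i => cases j with
      | inl j => simp [hσl, P]
      | inr j => simp [hσl, hσr, B]
    | inr i => cases j with
      | inl j => simp [hσl, hσr, C]
      | inr j => simp [hσr, D]
  have hdet : A.det = P.det * Matrix.det (D - C * ⅟P * B) := by
    rw [← Matrix.det_submatrix_equiv_self σ A, hA, Matrix.det_fromBlocks₁₁]
  -- the bordered determinants
  have hchat : ∀ p q : Fin m,
      cHat A k hk (cIdx hk p) (cIdx hk q) = P.det * (D - C * ⅟P * B) p q := by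
    intro p q
    let τ : Fin k ⊕ Fin 1 ≃ Fin (k + 1) := finSumFinEquiv
    have hτl : ∀ (r : Fin n) (i : Fin k), bidx k hk r (τ (Sum.inl i)) = Fin.castLE hk i := by
      intro r i
      have : ((τ (Sum.inl i) : Fin (k + 1)) : ℕ) < k := by simp [τ]
      apply Fin.ext
      simp [bidx, this, τ]
    have hτr : ∀ (r : Fin n) (j : Fin 1), bidx k hk r (τ (Sum.inr j)) = r := by
      intro r j
      have : ¬ ((τ (Sum.inr j) : Fin (k + 1)) : ℕ) < k := by
        simp [τ, Fin.ext_iff]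
      simp [bidx, this]
    have key : (Matrix.of fun i j : Fin (k + 1) =>
          A (bidx k hk (cIdx hk p) i) (bidx k hk (cIdx hk q) j)).submatrix τ τ =
        Matrix.fromBlocks P (Matrix.of fun i (_ : Fin 1) => B i q)
          (Matrix.of fun (_ : Fin 1) j => C p j)
          (Matrix.of fun (_ : Fin 1) (_ : Fin 1) => D p q) := by
      ext i j
      cases i with
      | inl i => cases j with
        | inl j => simp [hτl, P]
        | inr j => simp [hτl, hτr, B]
      | inr i => cases j with
        | inl j => simp [hτl, hτr, C]
        | inr j => simp [hτr, D]
    rw [cHat, ← Matrix.det_submatrix_equiv_self τ, key, Matrix.det_fromBlocks₁₁]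
    congr 1
    rw [Matrix.det_fin_one]
    simp only [Matrix.sub_apply, Matrix.of_apply, Matrix.mul_apply]
  have hCmat : (Matrix.of fun p q : Fin m =>
      cHat A k hk (cIdx hk p) (cIdx hk q)) = P.det • (D - C * ⅟P * B) := by
    ext p q
    simp [hchat, Matrix.smul_apply]
  rw [hCmat, Matrix.det_smul, hdet]
  have : Fintype.card (Fin m) = m := Fintype.card_fin m
  rw [this]
  have hms : m - 1 + 1 = m := by omega
  calc P.det ^ (m - 1) * (P.det * Matrix.det (D - C * ⅟P * B))
      = P.det ^ (m - 1 + 1) * Matrix.det (D - C * ⅟P * B) := by ring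
    _ = P.det ^ m * Matrix.det (D - C * ⅟P * B) := by rw [hms]

/-- `cHat` commutes with ring homomorphisms. -/
lemma cHat_map {R S : Type*} [CommRing R] [CommRing S] (f : R →+* S) {n : ℕ}
    (A : Matrix (Fin n) (Fin n) R) (k : ℕ) (hk : k ≤ n) (p q : Fin n) :
    f (cHat A k hk p q) = cHat (A.map f) k hk p q := by
  rw [cHat, cHat, RingHom.map_det]
  rfl

/-- Both sides of the Sylvester identity commute with ring homomorphisms. -/
lemma sylvester_map {R S : Type*} [CommRing R] [CommRing S] (f : R →+* S) {n k : ℕ}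
    (hk : k ≤ n) (A : Matrix (Fin n) (Fin n) R) :
    f ((Matrix.det (A.submatrix (Fin.castLE hk) (Fin.castLE hk))) ^ (n - k - 1) * A.det) =
      (Matrix.det ((A.map f).submatrix (Fin.castLE hk) (Fin.castLE hk))) ^ (n - k - 1) *
        (A.map f).det ∧
    f (Matrix.det (Matrix.of fun p q : Fin (n - k) =>
          cHat A k hk (cIdx hk p) (cIdx hk q))) =
      Matrix.det (Matrix.of fun p q : Fin (n - k) =>
          cHat (A.map f) k hk (cIdx hk p) (cIdx hk q)) := by
  constructor
  · rw [_root_.map_mul, map_pow, RingHom.map_det, RingHom.map_det]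
    congr 2
  · rw [RingHom.map_det]
    congr 1
    ext p q
    simp [RingHom.mapMatrix_apply, cHat_map]

/-- Sylvester identity for the generic matrix over `MvPolynomial`. -/
lemma sylvester_generic {n k : ℕ} (hk1 : 1 ≤ k) (hk : k ≤ n) (hkn : k ≤ n - 1) :
    (Matrix.det ((Matrix.mvPolynomialX (Fin n) (Fin n) ℤ).submatrix
        (Fin.castLE hk) (Fin.castLE hk))) ^ (n - k - 1) *
      (Matrix.mvPolynomialX (Fin n) (Fin n) ℤ).det =
      Matrix.det (Matrix.of fun p q : Fin (n - k) =>
        cHat (Matrix.mvPolynomialX (Fin n) (Fin n) ℤ) k hk (cIdx hk p) (cIdx hk q)) := by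
  have h0 : Matrix.det ((Matrix.mvPolynomialX (Fin n) (Fin n) ℤ).submatrix
      (Fin.castLE hk) (Fin.castLE hk)) ≠ 0 := by
    have hinj : Function.Injective
        (Prod.map (Fin.castLE hk) (Fin.castLE hk) : Fin k × Fin k → Fin n × Fin n) :=
      Function.Injective.prodMap (Fin.castLE_injective hk) (Fin.castLE_injective hk)
    have heq : (Matrix.mvPolynomialX (Fin n) (Fin n) ℤ).submatrix
          (Fin.castLE hk) (Fin.castLE hk) =
        (Matrix.mvPolynomialX (Fin k) (Fin k) ℤ).map
          (MvPolynomial.rename (Prod.map (Fin.castLE hk) (Fin.castLE hk))) := by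
      ext i j
      simp [Matrix.mvPolynomialX_apply, MvPolynomial.rename_X]
    have hdet : ((Matrix.mvPolynomialX (Fin k) (Fin k) ℤ).map
          ⇑(MvPolynomial.rename (Prod.map (Fin.castLE hk) (Fin.castLE hk)))).det =
        (MvPolynomial.rename (Prod.map (Fin.castLE hk) (Fin.castLE hk)))
          ((Matrix.mvPolynomialX (Fin k) (Fin k) ℤ).det) := by
      rw [AlgHom.map_det]; rfl
    rw [heq, hdet]
    intro h
    exact Matrix.det_mvPolynomialX_ne_zero (m := Fin k) (R := ℤ)
      (MvPolynomial.rename_injective _ hinj (by rw [h, map_zero]))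
  set A := Matrix.mvPolynomialX (Fin n) (Fin n) ℤ with hAdef
  let K := FractionRing (MvPolynomial (Fin n × Fin n) ℤ)
  let ψ : MvPolynomial (Fin n × Fin n) ℤ →+* K := algebraMap _ K
  have hψ : Function.Injective ψ := IsFractionRing.injective _ K
  have h0' : Matrix.det ((A.map ψ).submatrix (Fin.castLE hk) (Fin.castLE hk)) ≠ 0 := by
    have heq2 : (A.map ψ).submatrix (Fin.castLE hk) (Fin.castLE hk) =
        (A.submatrix (Fin.castLE hk) (Fin.castLE hk)).map ψ := rfl
    rw [heq2, ← RingHom.mapMatrix_apply, ← RingHom.map_det]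
    intro h
    exact h0 (hψ (by rw [h, map_zero]))
  have hfield := sylvester_field hk1 hk hkn (A.map ψ) h0'
  obtain ⟨h1, h2⟩ := sylvester_map ψ hk A
  apply hψ
  rw [h1, h2, hfield]

/-- Sylvester's determinant identity:
`(det A₀)^(n-k-1) * det A = det Ĉ`, where `A₀` is the leading `k×k` submatrix
of `A` and `Ĉ` is the `(n-k)×(n-k)` matrix of bordered determinants. -/
theorem sylvester_identity {R : Type*} [CommRing R] {n k : ℕ}
    (hk1 : 1 ≤ k) (hk : k ≤ n) (hkn : k ≤ n - 1) (A : Matrix (Fin n) (Fin n) R) :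
    (Matrix.det (A.submatrix (Fin.castLE hk) (Fin.castLE hk))) ^ (n - k - 1) * A.det =
      Matrix.det (Matrix.of fun p q : Fin (n - k) =>
        cHat A k hk (cIdx hk p) (cIdx hk q)) := by
  let G := Matrix.mvPolynomialX (Fin n) (Fin n) ℤ
  let φ : MvPolynomial (Fin n × Fin n) ℤ →+* R :=
    MvPolynomial.eval₂Hom (Int.castRingHom R) (fun p : Fin n × Fin n => A p.1 p.2)
  have hGA : G.map φ = A := by
    ext i j
    simp [G, φ, Matrix.mvPolynomialX]
  have hgen := sylvester_generic (n := n) (k := k) hk1 hk hkn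
  obtain ⟨h1, h2⟩ := sylvester_map φ hk G
  have := congrArg φ hgen
  rw [h1, h2, hGA] at this
  exact this
end

section
/- Let A be an n×n matrix over a field, let A₀ be its invertible leading k×k submatrix, and let Ĉ be the (n-k)×(n-k) matrix of bordered determinants ĉ_{pq} (p,q = k+1,…,n) as in Sylvester's identity. Then det A = det Ĉ / (det A₀)^{n-k-1}. -/
/-! Bordering the pivot block `A₀` by row `p` and column `q` gives, by the Schur
complement formula for a `1 × 1` corner, `ĉ_pq = det A₀ * S_pq`, where
`S = D - C A₀⁻¹ B` is the Schur complement of `A₀` in `A`. Hence `Ĉ = det A₀ • S`,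
so `det Ĉ = (det A₀)^(n-k) det S`, while `det A = det A₀ * det S` by the same
formula applied to `A` itself. -/

open Matrix

namespace Matrix

theorem det_fromBlocks_border {m n R : Type*} [Fintype m] [DecidableEq m] [CommRing R]
    (A : Matrix m m R) (B : Matrix m n R) (C : Matrix n m R) (D : Matrix n n R) [Invertible A]
    (p q : n) :
    det (fromBlocks A (B.submatrix id fun _ : Fin 1 => q) (C.submatrix (fun _ : Fin 1 => p) id)
        (D.submatrix (fun _ : Fin 1 => p) fun _ : Fin 1 => q)) =
      det A * (D - C * ⅟A * B) p q := by
  rw [det_fromBlocks₁₁, det_fin_one]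
  simp [mul_apply]

end Matrix

section Pivot

variable {R : Type*} {n k : ℕ} (hk : k ≤ n)

def pivotEquiv : Fin k ⊕ Fin (n - k) ≃ Fin n :=
  finSumFinEquiv.trans (finCongr (Nat.add_sub_cancel' hk))

theorem submatrix_pivotEquiv (A : Matrix (Fin n) (Fin n) R) :
    A.submatrix (pivotEquiv hk) (pivotEquiv hk) =
      fromBlocks (A.submatrix (Fin.castLE hk) (Fin.castLE hk))
        (A.submatrix (Fin.castLE hk) (cIdx hk))
        (A.submatrix (cIdx hk) (Fin.castLE hk)) (A.submatrix (cIdx hk) (cIdx hk)) := by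
  ext (i | i) (j | j) <;> rfl

theorem cHat_eq_det_fromBlocks [CommRing R] (A : Matrix (Fin n) (Fin n) R) (p q : Fin n) :
    cHat A k hk p q =
      det (fromBlocks (A.submatrix (Fin.castLE hk) (Fin.castLE hk))
        (A.submatrix (Fin.castLE hk) fun _ : Fin 1 => q)
        (A.submatrix (fun _ : Fin 1 => p) (Fin.castLE hk))
        (A.submatrix (fun _ : Fin 1 => p) fun _ : Fin 1 => q)) := by
  rw [cHat, ← det_submatrix_equiv_self finSumFinEquiv]
  congr 1
  ext (i | i) (j | j) <;> simp [bidx, Fin.castLE]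

end Pivot

/-- Sylvester's identity over a field with invertible pivot block:
`det A = det Ĉ / (det A₀)^(n-k-1)`. -/
theorem sylvester_identity_field {F : Type*} [Field F] {n k : ℕ}
    (hk1 : 1 ≤ k) (hk : k ≤ n) (hkn : k ≤ n - 1) (A : Matrix (Fin n) (Fin n) F)
    (h0 : IsUnit (Matrix.det (A.submatrix (Fin.castLE hk) (Fin.castLE hk)))) :
    A.det =
      Matrix.det (Matrix.of fun p q : Fin (n - k) =>
          cHat A k hk (cIdx hk p) (cIdx hk q)) /
        (Matrix.det (A.submatrix (Fin.castLE hk) (Fin.castLE hk))) ^ (n - k - 1) := by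
  set A₀ := A.submatrix (Fin.castLE hk) (Fin.castLE hk)
  let := A₀.invertibleOfIsUnitDet h0
  set S := A.submatrix (cIdx hk) (cIdx hk) -
    A.submatrix (cIdx hk) (Fin.castLE hk) * ⅟A₀ * A.submatrix (Fin.castLE hk) (cIdx hk)
  have hdetA : A.det = A₀.det * S.det := by
    rw [← det_submatrix_equiv_self (pivotEquiv hk), submatrix_pivotEquiv, det_fromBlocks₁₁]
  have hĈ : Matrix.of (fun p q => cHat A k hk (cIdx hk p) (cIdx hk q)) = A₀.det • S := by
    ext p q
    exact (cHat_eq_det_fromBlocks hk A _ _).trans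
      (det_fromBlocks_border A₀ (A.submatrix (Fin.castLE hk) (cIdx hk))
        (A.submatrix (cIdx hk) (Fin.castLE hk)) (A.submatrix (cIdx hk) (cIdx hk)) p q)
  rw [hĈ, det_smul, Fintype.card_fin, hdetA, ← pow_sub_one_mul (show n - k ≠ 0 by omega),
    mul_assoc, mul_div_cancel_left₀ _ (pow_ne_zero _ h0.ne_zero)]
end

section
/- Let A = (a_{ij}) be an n×n matrix (n ≥ 2) over a commutative ring with a_{nn} ≠ 0 (or over a field), and define the (n-1)×(n-1) matrix E by e_{ij} = a_{ij}·a_{nn} − a_{in}·a_{nj} for i,j = 1,…,n−1. Then a_{nn}^{n-2} · det A = det E. In particular, if a_{nn} is invertible, det A = det E / a_{nn}^{n-2}. -/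
/-!
Multiplying `A` on the left by the block matrix `[[a_nn • 1, -c], [0, 1]]`, where `c` is the last
column of `A` above the pivot, leaves the last row in place, clears the last column above the
pivot and turns the upper left block into `E`; hence `a_nn ^ (n-1) * det A = a_nn * det E`.
The factor `a_nn` cancels for the matrix of indeterminates over `ℤ`, where it is not a zero
divisor, and the cancelled identity specializes to every matrix over every commutative ring.
-/

open Matrix

namespace Matrix

variable {ι κ R : Type*} [Fintype κ] [Unique κ] [CommRing R]

def chioCondensation (M : Matrix (ι ⊕ κ) (ι ⊕ κ) R) : Matrix ι ι R :=
  M (.inr default) (.inr default) • M.toBlocks₁₁ - M.toBlocks₁₂ * M.toBlocks₂₁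

theorem chioCondensation_apply (M : Matrix (ι ⊕ κ) (ι ⊕ κ) R) (i j : ι) :
    chioCondensation M i j = M (.inl i) (.inl j) * M (.inr default) (.inr default) -
      M (.inl i) (.inr default) * M (.inr default) (.inl j) := by
  simp [chioCondensation, mul_apply, toBlocks₁₁, toBlocks₁₂, toBlocks₂₁, mul_comm]

theorem chioCondensation_map {S : Type*} [CommRing S] (M : Matrix (ι ⊕ κ) (ι ⊕ κ) R)
    (f : R →+* S) : chioCondensation (M.map f) = (chioCondensation M).map f := by
  ext i j
  simp [chioCondensation_apply]

variable [DecidableEq κ]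

theorem toBlocks₂₂_eq_scalar (M : Matrix (ι ⊕ κ) (ι ⊕ κ) R) :
    M.toBlocks₂₂ = scalar κ (M (.inr default) (.inr default)) := by
  ext k l
  simp [toBlocks₂₂, Subsingleton.elim k default, Subsingleton.elim l default]

variable [Fintype ι] [DecidableEq ι]

theorem pow_card_mul_det_eq_mul_det_chioCondensation (M : Matrix (ι ⊕ κ) (ι ⊕ κ) R) :
    M (.inr default) (.inr default) ^ Fintype.card ι * M.det =
      M (.inr default) (.inr default) * (chioCondensation M).det := by
  set a := M (.inr default) (.inr default)
  let L : Matrix (ι ⊕ κ) (ι ⊕ κ) R := fromBlocks (a • 1) (-M.toBlocks₁₂) 0 1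
  have hL : L.det = a ^ Fintype.card ι := by
    rw [det_fromBlocks_zero₂₁, det_smul, det_one, det_one, mul_one, mul_one]
  have hLM : L * M = fromBlocks (chioCondensation M) 0 M.toBlocks₂₁ M.toBlocks₂₂ := by
    conv_lhs => rw [← fromBlocks_toBlocks M]
    rw [fromBlocks_multiply, toBlocks₂₂_eq_scalar]
    simp [chioCondensation, a, sub_eq_add_neg, ← smul_eq_mul_diagonal]
  rw [← hL, ← det_mul, hLM, det_fromBlocks_zero₁₂, det_unique M.toBlocks₂₂, mul_comm]
  rfl

theorem pow_card_sub_one_mul_det_eq_det_chioCondensation [Nonempty ι]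
    (M : Matrix (ι ⊕ κ) (ι ⊕ κ) R) :
    M (.inr default) (.inr default) ^ (Fintype.card ι - 1) * M.det =
      (chioCondensation M).det := by
  let X := mvPolynomialX (ι ⊕ κ) (ι ⊕ κ) ℤ
  suffices hX : X (.inr default) (.inr default) ^ (Fintype.card ι - 1) * X.det =
      (chioCondensation X).det by
    let φ := MvPolynomial.eval₂Hom (Int.castRingHom R) fun p : (ι ⊕ κ) × (ι ⊕ κ) => M p.1 p.2
    have hφ : X.map φ = M := mvPolynomialX_map_eval₂ _ M
    have hpivot : φ (X (.inr default) (.inr default)) = M (.inr default) (.inr default) :=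
      congrFun (congrFun hφ _) _
    simpa [RingHom.map_det, ← chioCondensation_map, hφ, hpivot] using congrArg φ hX
  have hpivot : X (.inr default) (.inr default) ≠ 0 := MvPolynomial.X_ne_zero _
  apply mul_left_cancel₀ hpivot
  rw [← pow_card_mul_det_eq_mul_det_chioCondensation, ← mul_assoc, ← pow_succ',
    Nat.sub_add_cancel Fintype.card_pos]

end Matrix

/-- Chiò's condensation method: for `n ≥ 2` and pivot `a_{nn} ≠ 0`,
`a_{nn}^(n-2) * det A = det E` where `e_{ij} = a_{ij}a_{nn} - a_{in}a_{nj}`;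
in particular, if `a_{nn}` is invertible, `det A = det E / a_{nn}^(n-2)`
(division expressed via `Ring.inverse`). -/
theorem chio_condensation {R : Type*} [CommRing R] {n : ℕ} (hn : 2 ≤ n)
    (A : Matrix (Fin n) (Fin n) R)
    (lastIdx : Fin n) (hlast : (lastIdx : ℕ) = n - 1)
    (E : Matrix (Fin (n - 1)) (Fin (n - 1)) R)
    (hE : ∀ i j : Fin (n - 1),
      E i j = A ⟨i, by have := i.isLt; omega⟩ ⟨j, by have := j.isLt; omega⟩ * A lastIdx lastIdx -
        A ⟨i, by have := i.isLt; omega⟩ lastIdx * A lastIdx ⟨j, by have := j.isLt; omega⟩) :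
    (A lastIdx lastIdx) ^ (n - 2) * A.det = E.det ∧
      (IsUnit (A lastIdx lastIdx) →
        A.det = Ring.inverse ((A lastIdx lastIdx) ^ (n - 2)) * E.det) := by
  obtain ⟨m, rfl⟩ : ∃ m, n = m + 1 := ⟨n - 1, by omega⟩
  obtain rfl : lastIdx = Fin.last m := Fin.ext (by simpa using hlast)
  have : Nonempty (Fin m) := ⟨⟨0, by omega⟩⟩
  let M := A.submatrix finSumFinEquiv finSumFinEquiv
  have hEM : E = chioCondensation (κ := Fin 1) M := by
    ext i j
    rw [hE, chioCondensation_apply]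
    rfl
  have key : A (Fin.last m) (Fin.last m) ^ (m + 1 - 2) * A.det = E.det := by
    have hpivot : M (.inr default) (.inr default) = A (Fin.last m) (Fin.last m) := rfl
    rw [hEM, ← det_submatrix_equiv_self finSumFinEquiv A, ← hpivot,
      show m + 1 - 2 = Fintype.card (Fin m) - 1 by simp]
    exact pow_card_sub_one_mul_det_eq_det_chioCondensation M
  exact ⟨key, fun hu => by rw [← key, Ring.inverse_mul_cancel_left _ _ (hu.pow _)]⟩
end

section
/- Let A be an n×n invertible matrix over a field, with invertible leading k×k submatrix A₀. Let Ĉ = (ĉ_{pq})_{p,q=k+1,…,n} be the Sylvester condensed matrix of bordered determinants, and define b'_j (for j = k+1,…,n) as the determinant of the (k+1)×(k+1) matrix formed by bordering A₀ with row (a_{j1},…,a_{jk}) at the bottom and column (b_1,…,b_k,b_j) at the right. If x = (x_1,…,x_n) is the unique solution of Ax = b, then (x_{k+1},…,x_n) is the unique solution of Ĉ x^{(k)} = b^{(k)}, where b^{(k)} = (b'_{k+1},…,b'_n). -/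
open Matrix

/-- The condensed right-hand side `b'_p`: the bordered determinant of `A₀` with
row `p` of `A` at the bottom and the column `(b_1,…,b_k,b_p)` at the right. -/
def bHat {R : Type*} [CommRing R] {n : ℕ} (A : Matrix (Fin n) (Fin n) R)
    (b : Fin n → R) (k : ℕ) (hk : k ≤ n) (p : Fin n) : R :=
  Matrix.det (Matrix.of fun i j : Fin (k + 1) =>
    if h : (j : ℕ) < k then A (bidx k hk p i) ⟨j, lt_of_lt_of_le h hk⟩
    else b (bidx k hk p i))

lemma bordered_det {F : Type*} [Field F] {k : ℕ} (A0 : Matrix (Fin k) (Fin k) F)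
    [Invertible A0] (v w : Fin k → F) (d : F) :
    (Matrix.of fun i j : Fin (k + 1) =>
      if hi : (i : ℕ) < k then
        (if hj : (j : ℕ) < k then A0 ⟨i, hi⟩ ⟨j, hj⟩ else v ⟨i, hi⟩)
      else (if hj : (j : ℕ) < k then w ⟨j, hj⟩ else d)).det
    = A0.det * (d - ∑ j, (∑ i, w i * (⅟A0) i j) * v j) := by
  set M : Matrix (Fin (k+1)) (Fin (k+1)) F := Matrix.of fun i j : Fin (k + 1) =>
      if hi : (i : ℕ) < k then
        (if hj : (j : ℕ) < k then A0 ⟨i, hi⟩ ⟨j, hj⟩ else v ⟨i, hi⟩)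
      else (if hj : (j : ℕ) < k then w ⟨j, hj⟩ else d) with hM
  have hsub : M.submatrix finSumFinEquiv finSumFinEquiv =
      fromBlocks A0 (Matrix.of fun i (_ : Fin 1) => v i)
        (Matrix.of fun (_ : Fin 1) j => w j) (Matrix.of fun (_ _ : Fin 1) => d) := by
    ext i j
    cases i with
    | inl i =>
      cases j with
      | inl j => simp [hM, i.isLt, j.isLt]
      | inr j => simp [hM, i.isLt]
    | inr i =>
      cases j with
      | inl j => simp [hM, j.isLt]
      | inr j => simp [hM]
  rw [← det_submatrix_equiv_self finSumFinEquiv M, hsub, det_fromBlocks₁₁]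
  congr 1
  rw [det_fin_one]
  simp [Matrix.mul_apply, Finset.sum_mul]

lemma sum_split {F : Type*} [AddCommMonoid F] {n k : ℕ} (hk : k ≤ n) (f : Fin n → F) :
    ∑ t, f t = (∑ j : Fin k, f (Fin.castLE hk j)) + ∑ j : Fin (n - k), f (cIdx hk j) := by
  rw [← Fintype.sum_equiv (finSumFinEquiv.trans (finCongr (Nat.add_sub_cancel' hk)))
    (fun s => f ((finSumFinEquiv.trans (finCongr (Nat.add_sub_cancel' hk))) s)) f
    (fun s => rfl), Fintype.sum_sum_type]
  congr 1

/-- Equivalence relation: if `x` is the unique solution of `Ax = b` (with `A`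
invertible and `A₀` invertible), then `(x_{k+1},…,x_n)` is the unique solution
of the condensed system `Ĉ x^{(k)} = b^{(k)}`. -/
theorem condensed_system_equiv {F : Type*} [Field F] {n k : ℕ}
    (hk1 : 1 ≤ k) (hk : k ≤ n) (hkn : k ≤ n - 1) (A : Matrix (Fin n) (Fin n) F)
    (hA : IsUnit A.det)
    (h0 : IsUnit (Matrix.det (A.submatrix (Fin.castLE hk) (Fin.castLE hk))))
    (b : Fin n → F) (x : Fin n → F) (hx : A.mulVec x = b) :
    (Matrix.of fun p q : Fin (n - k) =>
        cHat A k hk (cIdx hk p) (cIdx hk q)).mulVec (fun i => x (cIdx hk i)) =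
      (fun p : Fin (n - k) => bHat A b k hk (cIdx hk p)) ∧
    ∀ y : Fin (n - k) → F,
      (Matrix.of fun p q : Fin (n - k) =>
          cHat A k hk (cIdx hk p) (cIdx hk q)).mulVec y =
        (fun p : Fin (n - k) => bHat A b k hk (cIdx hk p)) →
      y = fun i => x (cIdx hk i) := by
  classical
  set A0 : Matrix (Fin k) (Fin k) F := A.submatrix (Fin.castLE hk) (Fin.castLE hk) with hA0
  haveI : Invertible A0 := A0.invertibleOfIsUnitDet h0
  set Bm : Matrix (Fin k) (Fin (n-k)) F := A.submatrix (Fin.castLE hk) (cIdx hk) with hBm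
  set Cm : Matrix (Fin (n-k)) (Fin k) F := A.submatrix (cIdx hk) (Fin.castLE hk) with hCm
  set Dm : Matrix (Fin (n-k)) (Fin (n-k)) F := A.submatrix (cIdx hk) (cIdx hk) with hDm
  set S : Matrix (Fin (n-k)) (Fin (n-k)) F := Dm - Cm * ⅟A0 * Bm with hS
  set x1 : Fin k → F := fun i => x (Fin.castLE hk i) with hx1
  set x2 : Fin (n-k) → F := fun i => x (cIdx hk i) with hx2
  set b1 : Fin k → F := fun i => b (Fin.castLE hk i) with hb1
  set b2 : Fin (n-k) → F := fun i => b (cIdx hk i) with hb2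
  -- entrywise identity for cHat
  have hcHat : ∀ p q : Fin (n-k), cHat A k hk (cIdx hk p) (cIdx hk q) = A0.det * S p q := by
    intro p q
    have := bordered_det A0 (fun i => A (Fin.castLE hk i) (cIdx hk q))
      (fun j => A (cIdx hk p) (Fin.castLE hk j)) (A (cIdx hk p) (cIdx hk q))
    have hMeq : (Matrix.of fun i j : Fin (k + 1) =>
        A (bidx k hk (cIdx hk p) i) (bidx k hk (cIdx hk q) j)) =
        (Matrix.of fun i j : Fin (k + 1) =>
          if hi : (i : ℕ) < k then
            (if hj : (j : ℕ) < k then A0 ⟨i, hi⟩ ⟨j, hj⟩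
             else A (Fin.castLE hk ⟨i, hi⟩) (cIdx hk q))
          else (if hj : (j : ℕ) < k then A (cIdx hk p) (Fin.castLE hk ⟨j, hj⟩)
             else A (cIdx hk p) (cIdx hk q))) := by
      ext i j
      unfold bidx
      by_cases hi : (i : ℕ) < k <;> by_cases hj : (j : ℕ) < k <;> simp [hi, hj, hA0] <;> rfl
    rw [cHat, hMeq, this]
    congr 1
  -- identity for bHat
  have hbHat : ∀ p : Fin (n-k), bHat A b k hk (cIdx hk p)
      = A0.det * (b2 p - ∑ j, (∑ i, Cm p i * (⅟A0) i j) * b1 j) := by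
    intro p
    have := bordered_det A0 (fun i => b (Fin.castLE hk i))
      (fun j => A (cIdx hk p) (Fin.castLE hk j)) (b (cIdx hk p))
    have hMeq : (Matrix.of fun i j : Fin (k + 1) =>
        if h : (j : ℕ) < k then A (bidx k hk (cIdx hk p) i) ⟨j, lt_of_lt_of_le h hk⟩
        else b (bidx k hk (cIdx hk p) i)) =
        (Matrix.of fun i j : Fin (k + 1) =>
          if hi : (i : ℕ) < k then
            (if hj : (j : ℕ) < k then A0 ⟨i, hi⟩ ⟨j, hj⟩
             else b (Fin.castLE hk ⟨i, hi⟩))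
          else (if hj : (j : ℕ) < k then A (cIdx hk p) (Fin.castLE hk ⟨j, hj⟩)
             else b (cIdx hk p))) := by
      ext i j
      unfold bidx
      by_cases hi : (i : ℕ) < k <;> by_cases hj : (j : ℕ) < k <;> simp [hi, hj, hA0] <;> rfl
    rw [bHat, hMeq, this]
    simp [hb2, hb1, hCm]
  -- block equations
  have hblock1 : A0.mulVec x1 + Bm.mulVec x2 = b1 := by
    funext i
    have := congrFun hx (Fin.castLE hk i)
    rw [Matrix.mulVec, dotProduct] at this
    rw [sum_split hk] at this
    simpa [Matrix.mulVec, dotProduct, hA0, hBm, hx1, hx2, hb1] using this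
  have hblock2 : Cm.mulVec x1 + Dm.mulVec x2 = b2 := by
    funext i
    have := congrFun hx (cIdx hk i)
    rw [Matrix.mulVec, dotProduct] at this
    rw [sum_split hk] at this
    simpa [Matrix.mulVec, dotProduct, hCm, hDm, hx1, hx2, hb2] using this
  -- Schur equation: S * x2 = b2 - Cm * ⅟A0 * b1
  have hSx2 : S.mulVec x2 = b2 - Cm.mulVec ((⅟A0).mulVec b1) := by
    have hBx2 : Bm.mulVec x2 = b1 - A0.mulVec x1 := by
      rw [← hblock1]; abel
    rw [hS, Matrix.sub_mulVec, ← Matrix.mulVec_mulVec, ← Matrix.mulVec_mulVec, hBx2,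
      Matrix.mulVec_sub, Matrix.mulVec_mulVec, invOf_mul_self, Matrix.one_mulVec,
      Matrix.mulVec_sub]
    have hDx2 : Dm.mulVec x2 = b2 - Cm.mulVec x1 := by
      rw [← hblock2]; abel
    rw [hDx2]; abel
  -- bHat in terms of mulVec
  have hbHat' : ∀ p : Fin (n-k), bHat A b k hk (cIdx hk p)
      = A0.det * (b2 - Cm.mulVec ((⅟A0).mulVec b1)) p := by
    intro p
    rw [hbHat p]
    congr 1
    simp only [Pi.sub_apply]
    congr 1
    simp only [Matrix.mulVec, dotProduct, Finset.sum_mul]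
    rw [Finset.sum_comm]
    refine Finset.sum_congr rfl fun i _ => ?_
    rw [Finset.mul_sum]
    exact Finset.sum_congr rfl fun j _ => by ring
  -- condensed matrix mulVec
  have hCmul : ∀ y : Fin (n-k) → F,
      (Matrix.of fun p q : Fin (n - k) =>
        cHat A k hk (cIdx hk p) (cIdx hk q)).mulVec y = fun p => A0.det * (S.mulVec y) p := by
    intro y
    funext p
    simp only [Matrix.mulVec, dotProduct, Matrix.of_apply]
    rw [Finset.mul_sum]
    exact Finset.sum_congr rfl fun q _ => by rw [hcHat p q, mul_assoc]
  constructor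
  · rw [hCmul x2, hSx2]
    funext p
    rw [hbHat' p]
  · intro y hy
    have hSunit : IsUnit S.det := by
      have hdetA : A.det = A0.det * S.det := by
        have hAeq : A.submatrix (finSumFinEquiv.trans (finCongr (Nat.add_sub_cancel' hk)))
            (finSumFinEquiv.trans (finCongr (Nat.add_sub_cancel' hk))) =
            fromBlocks A0 Bm Cm Dm := by
          ext i j
          cases i <;> cases j <;> rfl
        rw [← det_submatrix_equiv_self (finSumFinEquiv.trans (finCongr (Nat.add_sub_cancel' hk))) A,
          hAeq, det_fromBlocks₁₁]
      rw [hdetA] at hA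
      exact (IsUnit.mul_iff.mp hA).2
    haveI : Invertible S := S.invertibleOfIsUnitDet hSunit
    have h1 : S.mulVec y = S.mulVec x2 := by
      rw [hCmul y] at hy
      funext p
      have := congrFun hy p
      rw [hbHat' p, ← hSx2] at this
      exact mul_left_cancel₀ h0.ne_zero this
    calc y = (⅟S * S).mulVec y := by rw [invOf_mul_self, Matrix.one_mulVec]
    _ = (⅟S).mulVec (S.mulVec y) := by rw [← Matrix.mulVec_mulVec]
    _ = (⅟S).mulVec (S.mulVec x2) := by rw [h1]
    _ = x2 := by rw [Matrix.mulVec_mulVec, invOf_mul_self, Matrix.one_mulVec]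
end

section
/- For any n×n matrix A over a commutative ring with invertible leading k×k submatrix A₀, and any p,q ∈ {k+1,…,n}, the bordered determinant ĉ_{pq} equals (det A₀)·(a_{pq} − r_p A₀⁻¹ c_q), where r_p = (a_{p1},…,a_{pk}) and c_q = (a_{1q},…,a_{kq})ᵀ. Equivalently, Ĉ = (det A₀) · S, where S is the Schur complement of A₀ in A. -/
open Matrix

/-- The bordered determinant equals `det A₀` times the corresponding Schur
complement entry: `ĉ_{pq} = (det A₀) · (a_{pq} - r_p A₀⁻¹ c_q)`. -/
theorem cHat_eq_det_mul_schur {R : Type*} [CommRing R] {n k : ℕ}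
    (hk : k ≤ n) (A : Matrix (Fin n) (Fin n) R)
    (h0 : IsUnit (Matrix.det (A.submatrix (Fin.castLE hk) (Fin.castLE hk))))
    (p q : Fin n) (hp : k ≤ (p : ℕ)) (hq : k ≤ (q : ℕ)) :
    cHat A k hk p q =
      Matrix.det (A.submatrix (Fin.castLE hk) (Fin.castLE hk)) *
        (A p q -
          dotProduct (fun i : Fin k => A p (Fin.castLE hk i))
            ((A.submatrix (Fin.castLE hk) (Fin.castLE hk))⁻¹.mulVec
              (fun i : Fin k => A (Fin.castLE hk i) q))) := by
  set A₀ := A.submatrix (Fin.castLE hk) (Fin.castLE hk) with hA₀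
  haveI : Invertible A₀ := A₀.invertibleOfIsUnitDet h0
  set B : Matrix (Fin k) (Fin 1) R := Matrix.of fun i _ => A (Fin.castLE hk i) q with hB
  set C : Matrix (Fin 1) (Fin k) R := Matrix.of fun _ j => A p (Fin.castLE hk j) with hC
  set D : Matrix (Fin 1) (Fin 1) R := Matrix.of fun _ _ => A p q with hD
  have hM : cHat A k hk p q = (Matrix.fromBlocks A₀ B C D).det := by
    rw [cHat, ← Matrix.det_submatrix_equiv_self finSumFinEquiv]
    congr 1
    ext i j
    have hadd : ∀ m : ℕ, ¬ k + m < k := fun m => by omega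
    rcases i with i | i <;> rcases j with j | j <;>
      simp [bidx, Matrix.submatrix_apply, i.isLt, j.isLt, hadd, hA₀, hB, hC, hD] <;>
      rfl
  rw [hM, Matrix.det_fromBlocks₁₁, Matrix.invOf_eq_nonsing_inv]
  congr 1
  rw [Matrix.det_fin_one]
  simp only [Matrix.sub_apply, hD, Matrix.of_apply, Matrix.mul_apply, Matrix.mulVec,
    dotProduct, hB, hC, Finset.mul_sum, Finset.sum_mul]
  congr 1
  rw [Finset.sum_comm]
  apply Finset.sum_congr rfl
  intro j _
  apply Finset.sum_congr rfl
  intro i _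
  ring
end

section
/- Let A be an n×n matrix over a commutative ring with leading k×k submatrix A₀. For a fixed row index p ∈ {k+1,…,n} and each j ∈ {1,…,k}, let A₀^{p,j} be the negative of the determinant of the k×k matrix obtained from A₀ by replacing its j-th row with (a_{p1},…,a_{pk}). Then for every q ∈ {k+1,…,n}, the bordered determinant satisfies ĉ_{pq} = Σ_{j=1}^{k} A₀^{p,j} · a_{jq} + (det A₀) · a_{pq}. -/
open Matrix

/-- `A₀^{p,j}`: the negative of the determinant of `A₀` with its `j`-th row
replaced by `(a_{p1},…,a_{pk})`. -/
def rowCoeff {R : Type*} [CommRing R] {n : ℕ} (A : Matrix (Fin n) (Fin n) R) (k : ℕ)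
    (hk : k ≤ n) (p : Fin n) (j : Fin k) : R :=
  - Matrix.det (Matrix.of fun r c : Fin k =>
      if r = j then A p (Fin.castLE hk c) else A (Fin.castLE hk r) (Fin.castLE hk c))

/-- The cyclic permutation that sends `j ↦ k-1`, `r ↦ r-1` for `j < r`, and fixes `r < j`. -/
def sigPerm {k : ℕ} (j : Fin k) : Equiv.Perm (Fin k) :=
  Fin.revPerm.trans ((Fin.cycleRange j.rev).trans Fin.revPerm)

lemma sigPerm_sign {k : ℕ} (j : Fin k) :
    Equiv.Perm.sign (sigPerm j) = (-1) ^ (j.rev : ℕ) := by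
  have hu := Int.units_mul_self (Equiv.Perm.sign (Fin.revPerm (n := k)))
  have h : sigPerm j = Fin.revPerm * Fin.cycleRange j.rev * Fin.revPerm := rfl
  rw [h, _root_.map_mul, _root_.map_mul, Fin.sign_cycleRange]
  calc Equiv.Perm.sign Fin.revPerm * (-1) ^ (j.rev : ℕ) * Equiv.Perm.sign Fin.revPerm
      = (Equiv.Perm.sign Fin.revPerm * Equiv.Perm.sign Fin.revPerm) * (-1) ^ (j.rev : ℕ) :=
        mul_right_comm _ _ _
    _ = (-1) ^ (j.rev : ℕ) := by rw [hu, one_mul]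

lemma sigPerm_of_lt {k : ℕ} {j r : Fin k} (h : r < j) : sigPerm j r = r := by
  cases k with
  | zero => exact j.elim0
  | succ m => ?_
  simp only [sigPerm, Equiv.trans_apply, Fin.revPerm_apply]
  rw [Fin.cycleRange_of_gt (by rwa [Fin.rev_lt_rev]), Fin.rev_rev]

lemma sigPerm_self {k : ℕ} (j : Fin k) : (sigPerm j j : ℕ) = k - 1 := by
  cases k with
  | zero => exact j.elim0
  | succ m => ?_
  simp only [sigPerm, Equiv.trans_apply, Fin.revPerm_apply]
  rw [Fin.cycleRange_self, Fin.val_rev]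
  simp

lemma sigPerm_of_gt {k : ℕ} {j r : Fin k} (h : j < r) : (sigPerm j r : ℕ) = (r : ℕ) - 1 := by
  cases k with
  | zero => exact j.elim0
  | succ m => ?_
  simp only [sigPerm, Equiv.trans_apply, Fin.revPerm_apply]
  rw [Fin.cycleRange_of_lt (by rwa [Fin.rev_lt_rev])]
  have hr1 : 1 ≤ (r : ℕ) := by
    have := Fin.lt_iff_val_lt_val.mp h; omega
  have hk := r.isLt
  have hval : ((Fin.rev r + 1 : Fin (m+1)) : ℕ) = (m+1) - (r : ℕ) := by
    rw [Fin.val_add_one_of_lt]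
    · rw [Fin.val_rev]; try omega
    · rw [Fin.lt_iff_val_lt_val, Fin.val_rev, Fin.val_last]; omega
  rw [Fin.val_rev, hval]
  omega

lemma bidx_of_lt {n k : ℕ} (hk : k ≤ n) (p : Fin n) (i : Fin (k + 1)) (h : (i : ℕ) < k) :
    bidx k hk p i = Fin.castLE hk ⟨i, h⟩ := dif_pos h

lemma bidx_of_ge {n k : ℕ} (hk : k ≤ n) (p : Fin n) (i : Fin (k + 1)) (h : ¬ (i : ℕ) < k) :
    bidx k hk p i = p := dif_neg h

lemma minor_submatrix {R : Type*} [CommRing R] {n k : ℕ} (hk : k ≤ n)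
    (A : Matrix (Fin n) (Fin n) R) (p : Fin n) (j : Fin k) :
    (Matrix.of fun r c : Fin k =>
        A (bidx k hk p ((Fin.castSucc j).succAbove r)) (Fin.castLE hk c)).submatrix
        (sigPerm j) id
      = Matrix.of fun r c : Fin k =>
          if r = j then A p (Fin.castLE hk c) else A (Fin.castLE hk r) (Fin.castLE hk c) := by
  ext r c
  simp only [Matrix.submatrix_apply, Matrix.of_apply, id_eq]
  rcases lt_trichotomy r j with h | h | h
  · rw [sigPerm_of_lt h, if_neg h.ne,
      Fin.succAbove_of_castSucc_lt _ _ (Fin.castSucc_lt_castSucc_iff.mpr h)]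
    rw [bidx_of_lt hk p _ (by simp)]
    congr 1
  · subst h
    rw [if_pos rfl]
    have hs : (sigPerm r r : ℕ) = k - 1 := sigPerm_self r
    have hk1 := r.isLt
    rw [Fin.succAbove_of_le_castSucc _ _ (by
      rw [Fin.le_iff_val_le_val, Fin.coe_castSucc, Fin.coe_castSucc, hs]; omega)]
    rw [bidx_of_ge hk p _ (by rw [Fin.val_succ, hs]; omega)]
  · have hs := sigPerm_of_gt h
    have hk1 := r.isLt
    have hjr := Fin.lt_iff_val_lt_val.mp h
    rw [if_neg h.ne',
      Fin.succAbove_of_le_castSucc _ _ (by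
        rw [Fin.le_iff_val_le_val, Fin.coe_castSucc, Fin.coe_castSucc, hs]; omega)]
    rw [bidx_of_lt hk p _ (by rw [Fin.val_succ, hs]; omega)]
    congr 1
    rw [Fin.ext_iff]
    simp [hs]
    omega

/-- Row-wise expansion of the bordered determinant:
`ĉ_{pq} = Σ_{j=1}^{k} A₀^{p,j} · a_{jq} + (det A₀) · a_{pq}`. -/
theorem cHat_row_expansion {R : Type*} [CommRing R] {n k : ℕ}
    (hk : k ≤ n) (A : Matrix (Fin n) (Fin n) R)
    (p q : Fin n) (hp : k ≤ (p : ℕ)) (hq : k ≤ (q : ℕ)) :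
    cHat A k hk p q =
      (∑ j : Fin k, rowCoeff A k hk p j * A (Fin.castLE hk j) q) +
        Matrix.det (A.submatrix (Fin.castLE hk) (Fin.castLE hk)) * A p q := by
  rw [cHat, Matrix.det_succ_column _ (Fin.last k), Fin.sum_univ_castSucc]
  congr 1
  · refine Finset.sum_congr rfl fun j _ => ?_
    set M : Matrix (Fin (k+1)) (Fin (k+1)) R :=
      Matrix.of fun i j' : Fin (k + 1) => A (bidx k hk p i) (bidx k hk q j') with hM
    set Minor : Matrix (Fin k) (Fin k) R :=
      Matrix.of fun r c : Fin k =>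
        A (bidx k hk p ((Fin.castSucc j).succAbove r)) (Fin.castLE hk c) with hMin
    set B : Matrix (Fin k) (Fin k) R :=
      Matrix.of fun r c : Fin k =>
        if r = j then A p (Fin.castLE hk c) else A (Fin.castLE hk r) (Fin.castLE hk c) with hB
    have hmat : M.submatrix (Fin.castSucc j).succAbove (Fin.last k).succAbove = Minor := by
      ext r c
      rw [Fin.succAbove_last]
      simp only [Matrix.submatrix_apply, hM, hMin, Matrix.of_apply]
      rw [bidx_of_lt hk q _ (by simp)]
      congr 1
    have hperm := Matrix.det_permute (sigPerm j) Minor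
    rw [hMin] at hperm
    rw [minor_submatrix hk A p j, ← hB] at hperm
    have hsign : ((Equiv.Perm.sign (sigPerm j) : ℤ) : R) = (-1) ^ (j.rev : ℕ) := by
      rw [sigPerm_sign]; push_cast; ring
    have hBr : B.det = - rowCoeff A k hk p j := by rw [rowCoeff, ← hB, neg_neg]
    have hOdd : Odd ((j : ℕ) + k + (j.rev : ℕ)) := by
      have := j.isLt
      refine ⟨k - 1, ?_⟩
      rw [Fin.val_rev]
      omega
    have key : (-1 : R) ^ ((j : ℕ) + k) * Minor.det = rowCoeff A k hk p j := by
      have h2 : ((-1 : R) ^ (j.rev : ℕ)) * ((-1 : R) ^ (j.rev : ℕ)) = 1 := by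
        rw [← pow_add]; exact Even.neg_one_pow ⟨_, rfl⟩
      have hMd : Minor.det = (-1 : R) ^ (j.rev : ℕ) * B.det := by
        calc Minor.det = ((-1 : R) ^ (j.rev : ℕ) * (-1 : R) ^ (j.rev : ℕ)) * Minor.det := by
              rw [h2, one_mul]
          _ = (-1 : R) ^ (j.rev : ℕ) * B.det := by
              rw [hperm, hsign]
              ring
      rw [hMd, hBr, ← mul_assoc, ← pow_add]
      rw [show ((j : ℕ) + k + (j.rev : ℕ)) = (j : ℕ) + k + (j.rev : ℕ) from rfl,
        Odd.neg_one_pow hOdd]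
      ring
    rw [hmat]
    have hentry : M (Fin.castSucc j) (Fin.last k) = A (Fin.castLE hk j) q := by
      simp only [hM, Matrix.of_apply]
      rw [bidx_of_lt hk p _ (by simp), bidx_of_ge hk q _ (by simp)]
      congr 1
    rw [hentry]
    have hexp : ((Fin.castSucc j : Fin (k+1)) : ℕ) + ((Fin.last k : Fin (k+1)) : ℕ)
        = (j : ℕ) + k := by simp
    rw [hexp]
    calc (-1 : R) ^ ((j : ℕ) + k) * A (Fin.castLE hk j) q * Minor.det
        = ((-1 : R) ^ ((j : ℕ) + k) * Minor.det) * A (Fin.castLE hk j) q := by ring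
      _ = rowCoeff A k hk p j * A (Fin.castLE hk j) q := by rw [key]
  · have h1 : Matrix.of (fun i j' : Fin (k + 1) => A (bidx k hk p i) (bidx k hk q j'))
        (Fin.last k) (Fin.last k) = A p q := by
      simp only [Matrix.of_apply]
      rw [bidx_of_ge hk p _ (by simp), bidx_of_ge hk q _ (by simp)]
    have h2 : (Matrix.of (fun i j' : Fin (k + 1) => A (bidx k hk p i) (bidx k hk q j'))).submatrix
        (Fin.last k).succAbove (Fin.last k).succAbove
        = A.submatrix (Fin.castLE hk) (Fin.castLE hk) := by
      ext r c
      rw [Fin.succAbove_last]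
      simp only [Matrix.submatrix_apply, Matrix.of_apply]
      rw [bidx_of_lt hk p _ (by simp), bidx_of_lt hk q _ (by simp)]
      congr 1
    rw [h1, h2]
    have : (-1 : R) ^ (((Fin.last k : Fin (k+1)) : ℕ) + ((Fin.last k : Fin (k+1)) : ℕ)) = 1 := by
      simp only [Fin.val_last]
      exact Even.neg_one_pow ⟨k, rfl⟩
    rw [this]
    ring
end

section
/- Let A be an n×n invertible matrix over a field with invertible leading k×k submatrix A₀, and let b ∈ Fⁿ. For j ∈ {k+1,…,n}, define Ĉ_j(b^{(k)}) as the condensed matrix Ĉ with its column indexed by j replaced by b^{(k)} (the condensed right-hand side). Then det(A_j(b)) · det(Ĉ) = det(A) · det(Ĉ_j(b^{(k)})), where A_j(b) is A with column j replaced by b. -/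
/-!
With the pivot block `A₀` invertible, bordering `A₀` by row `p` and column `q` gives
`ĉ_{pq} = det A₀ · S_{pq}`, where `S` is the Schur complement of `A₀` in `A`. Hence
`Ĉ = det A₀ • S` and, since `det A = det A₀ · det S`, Sylvester's identity
`det A₀ · det Ĉ = (det A₀)^(n-k) · det A` holds. Replacing column `j > k` of `A` by `b` leaves
`A₀` unchanged and turns `Ĉ` into `Ĉ_j(b^{(k)})`, so Sylvester's identity for `A` and for `A_j(b)`
gives the claim after cancelling `det A₀`.
-/

open Matrix

theorem Fin.snoc_comp_finSumFinEquiv {α : Type*} {k : ℕ} (f : Fin k → α) (a : α) :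
    (Fin.snoc f a : Fin (k + 1) → α) ∘ finSumFinEquiv = Sum.elim f fun _ => a := by
  ext (i | i)
  · exact Fin.snoc_castSucc (α := fun _ => α) ..
  · rw [Fin.fin_one_eq_zero i]
    exact Fin.snoc_last (α := fun _ => α) ..

namespace Matrix

theorem submatrix_updateCol_of_ne {m n o l α : Type*} [DecidableEq n] (A : Matrix m n α)
    (q : n) (v : m → α) (r : l → m) (c : o → n) (hc : ∀ i, c i ≠ q) :
    (A.updateCol q v).submatrix r c = A.submatrix r c := by
  ext i l
  simp [hc]

variable {m n κ ι R : Type*} [Fintype κ] [DecidableEq κ] [CommRing R]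

/-- Entry `(p, q)` is the Schur complement of the pivot block `A[r, c]` in `A` bordered by row `p`
and column `q`; meaningful only when the pivot block is invertible (else `⁻¹` is `0`). -/
noncomputable def schurCompl (A : Matrix m n R) (r : κ → m) (c : κ → n) : Matrix m n R :=
  A - A.submatrix id c * (A.submatrix r c)⁻¹ * A.submatrix r id

theorem submatrix_schurCompl {ι' : Type*} (A : Matrix m n R) (r : κ → m) (c : κ → n)
    (s : ι → m) (t : ι' → n) :
    (schurCompl A r c).submatrix s t =
      A.submatrix s t - A.submatrix s c * (A.submatrix r c)⁻¹ * A.submatrix r t := by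
  ext
  simp [schurCompl, mul_apply]

theorem det_submatrix_sumElim [Fintype ι] [DecidableEq ι] (A : Matrix m n R) (r : κ → m)
    (c : κ → n) (s : ι → m) (t : ι → n) (h : IsUnit (A.submatrix r c).det) :
    (A.submatrix (Sum.elim r s) (Sum.elim c t)).det =
      (A.submatrix r c).det * ((schurCompl A r c).submatrix s t).det := by
  let := invertibleOfIsUnitDet _ h
  have hblocks : A.submatrix (Sum.elim r s) (Sum.elim c t) =
      fromBlocks (A.submatrix r c) (A.submatrix r t) (A.submatrix s c) (A.submatrix s t) := by
    ext (i | i) (l | l) <;> rfl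
  rw [hblocks, det_fromBlocks₁₁, submatrix_schurCompl, invOf_eq_nonsing_inv]

theorem det_submatrix_snoc_snoc {k : ℕ} (A : Matrix m n R) (r : Fin k → m) (c : Fin k → n)
    (p : m) (q : n) (h : IsUnit (A.submatrix r c).det) :
    (A.submatrix (Fin.snoc r p : Fin (k + 1) → m) (Fin.snoc c q : Fin (k + 1) → n)).det =
      (A.submatrix r c).det * schurCompl A r c p q := by
  rw [← det_submatrix_equiv_self finSumFinEquiv, submatrix_submatrix,
    Fin.snoc_comp_finSumFinEquiv, Fin.snoc_comp_finSumFinEquiv,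
    det_submatrix_sumElim A r c _ _ h, det_unique (n := Fin 1)]
  rfl

end Matrix

theorem bidx_eq_snoc {n k : ℕ} (hk : k ≤ n) (p : Fin n) :
    bidx k hk p = Fin.snoc (Fin.castLE hk) p := by
  ext i
  induction i using Fin.lastCases with
  | last => simp [bidx]
  | cast i => simp [bidx]

theorem sumElim_castLE_cIdx_bijective {n k : ℕ} (hk : k ≤ n) :
    Function.Bijective (Sum.elim (Fin.castLE hk) (cIdx hk)) := by
  rw [Fintype.bijective_iff_injective_and_card]
  refine ⟨?_, by simp; omega⟩
  rintro (i | i) (l | l) h <;> simp [Fin.ext_iff, cIdx] at h ⊢ <;> omega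

theorem ne_cIdx_of_lt {n k : ℕ} (hk : k ≤ n) {x : Fin n} (hx : (x : ℕ) < k) (j : Fin (n - k)) :
    x ≠ cIdx hk j := by
  simp [Fin.ext_iff, cIdx]
  omega

section Condensation

variable {R : Type*} [CommRing R] {n k : ℕ} (hk : k ≤ n)

abbrev condensation (A : Matrix (Fin n) (Fin n) R) : Matrix (Fin (n - k)) (Fin (n - k)) R :=
  of fun p q => cHat A k hk (cIdx hk p) (cIdx hk q)

theorem condensation_updateCol_cIdx (A : Matrix (Fin n) (Fin n) R) (b : Fin n → R)
    (j : Fin (n - k)) :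
    condensation hk (A.updateCol (cIdx hk j) b) =
      (condensation hk A).updateCol j fun p => bHat A b k hk (cIdx hk p) := by
  ext p q
  simp only [updateCol_apply, of_apply]
  split_ifs with hq
  · subst hq
    refine congrArg det (ext fun i l => ?_)
    by_cases hl : (l : ℕ) < k
    · simp [bidx, hl, updateCol_ne (ne_cIdx_of_lt hk (x := ⟨l, by omega⟩) hl q)]
    · simp [bidx, hl]
  · refine congrArg det (A.submatrix_updateCol_of_ne _ _ _ _ fun l => ?_)
    by_cases hl : (l : ℕ) < k
    · simpa [bidx, hl] using ne_cIdx_of_lt hk hl j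
    · simpa [bidx, hl, cIdx, Fin.ext_iff] using hq

variable {A : Matrix (Fin n) (Fin n) R}
  (h0 : IsUnit (A.submatrix (Fin.castLE hk) (Fin.castLE hk)).det)
include h0

theorem cHat_eq_det_mul_schurCompl (p q : Fin n) :
    cHat A k hk p q = (A.submatrix (Fin.castLE hk) (Fin.castLE hk)).det *
      schurCompl A (Fin.castLE hk) (Fin.castLE hk) p q := by
  rw [cHat, ← det_submatrix_snoc_snoc _ _ _ _ _ h0, ← bidx_eq_snoc, ← bidx_eq_snoc]
  rfl

theorem det_eq_det_mul_det_schurCompl :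
    A.det = (A.submatrix (Fin.castLE hk) (Fin.castLE hk)).det *
      ((schurCompl A (Fin.castLE hk) (Fin.castLE hk)).submatrix (cIdx hk) (cIdx hk)).det := by
  rw [← det_submatrix_sumElim _ _ _ _ _ h0,
    ← det_submatrix_equiv_self (Equiv.ofBijective _ (sumElim_castLE_cIdx_bijective hk))]
  rfl

theorem det_mul_det_condensation :
    (A.submatrix (Fin.castLE hk) (Fin.castLE hk)).det * (condensation hk A).det =
      (A.submatrix (Fin.castLE hk) (Fin.castLE hk)).det ^ (n - k) * A.det := by
  have hC : condensation hk A = (A.submatrix (Fin.castLE hk) (Fin.castLE hk)).det •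
      (schurCompl A (Fin.castLE hk) (Fin.castLE hk)).submatrix (cIdx hk) (cIdx hk) := by
    ext p q
    exact cHat_eq_det_mul_schurCompl hk h0 _ _
  rw [hC, det_smul, Fintype.card_fin, det_eq_det_mul_det_schurCompl hk h0]
  ring

end Condensation

theorem cramer_ratio_condensation_general {F : Type*} [Field F] {n k : ℕ}
    (hk : k ≤ n) (A : Matrix (Fin n) (Fin n) F)
    (h0 : IsUnit (Matrix.det (A.submatrix (Fin.castLE hk) (Fin.castLE hk))))
    (b : Fin n → F) (j : Fin (n - k)) :
    Matrix.det (A.updateCol (cIdx hk j) b) *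
        Matrix.det (Matrix.of fun p q : Fin (n - k) =>
          cHat A k hk (cIdx hk p) (cIdx hk q)) =
      A.det *
        Matrix.det ((Matrix.of fun p q : Fin (n - k) =>
            cHat A k hk (cIdx hk p) (cIdx hk q)).updateCol j
          (fun p : Fin (n - k) => bHat A b k hk (cIdx hk p))) := by
  have hpivot : (A.updateCol (cIdx hk j) b).submatrix (Fin.castLE hk) (Fin.castLE hk) =
      A.submatrix (Fin.castLE hk) (Fin.castLE hk) :=
    A.submatrix_updateCol_of_ne _ _ _ _ fun i => ne_cIdx_of_lt hk i.isLt j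
  have hA := det_mul_det_condensation hk h0
  have hAj := det_mul_det_condensation hk (hpivot ▸ h0)
  rw [hpivot, condensation_updateCol_cIdx] at hAj
  refine h0.mul_left_cancel ?_
  linear_combination (A.updateCol (cIdx hk j) b).det * hA - A.det * hAj

/-- Cramer ratios are preserved under Sylvester condensation:
`det(A_j(b)) · det Ĉ = det A · det(Ĉ_j(b^{(k)}))`. -/
theorem cramer_ratio_condensation {F : Type*} [Field F] {n k : ℕ}
    (hk1 : 1 ≤ k) (hk : k ≤ n) (hkn : k ≤ n - 1) (A : Matrix (Fin n) (Fin n) F)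
    (hA : IsUnit A.det)
    (h0 : IsUnit (Matrix.det (A.submatrix (Fin.castLE hk) (Fin.castLE hk))))
    (b : Fin n → F) (j : Fin (n - k)) :
    Matrix.det (A.updateCol (cIdx hk j) b) *
        Matrix.det (Matrix.of fun p q : Fin (n - k) =>
          cHat A k hk (cIdx hk p) (cIdx hk q)) =
      A.det *
        Matrix.det ((Matrix.of fun p q : Fin (n - k) =>
            cHat A k hk (cIdx hk p) (cIdx hk q)).updateCol j
          (fun p : Fin (n - k) => bHat A b k hk (cIdx hk p))) :=
  cramer_ratio_condensation_general hk A h0 b j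
end

section
/- The condensation of the augmented right-hand side commutes with Sylvester condensation: if b^{(k)}_p is the bordered determinant of A₀ with row p of A and the column (b_1,…,b_k,b_p), then for the partitioned system with A = [[A₀,B],[C,D]] and b = (b⁰, b¹), one has b^{(k)} = (det A₀)·(b¹ − C A₀⁻¹ b⁰). -/
open Matrix

/-- Condensation of the right-hand side:
`b^{(k)}_p = (det A₀) · (b¹ - C A₀⁻¹ b⁰)_p`. -/
theorem bHat_eq_det_mul_schur_rhs {F : Type*} [Field F] {n k : ℕ}
    (hk : k ≤ n) (A : Matrix (Fin n) (Fin n) F)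
    (h0 : IsUnit (Matrix.det (A.submatrix (Fin.castLE hk) (Fin.castLE hk))))
    (b : Fin n → F) (p : Fin n) (hp : k ≤ (p : ℕ)) :
    bHat A b k hk p =
      Matrix.det (A.submatrix (Fin.castLE hk) (Fin.castLE hk)) *
        (b p -
          dotProduct (fun i : Fin k => A p (Fin.castLE hk i))
            ((A.submatrix (Fin.castLE hk) (Fin.castLE hk))⁻¹.mulVec
              (fun i : Fin k => b (Fin.castLE hk i)))) := by
  classical
  set A₀ := A.submatrix (Fin.castLE hk) (Fin.castLE hk) with hA₀
  set M : Matrix (Fin (k+1)) (Fin (k+1)) F := Matrix.of fun i j : Fin (k + 1) =>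
    if h : (j : ℕ) < k then A (bidx k hk p i) ⟨j, lt_of_lt_of_le h hk⟩
    else b (bidx k hk p i) with hM
  have hdet : bHat A b k hk p = (M.submatrix finSumFinEquiv finSumFinEquiv).det := by
    rw [Matrix.det_submatrix_equiv_self]; rfl
  have hblocks : M.submatrix finSumFinEquiv finSumFinEquiv =
      Matrix.fromBlocks A₀ (Matrix.of fun i (_ : Fin 1) => b (Fin.castLE hk i))
        (Matrix.of fun (_ : Fin 1) j => A p (Fin.castLE hk j))
        (Matrix.of fun (_ : Fin 1) (_ : Fin 1) => b p) := by
    ext i j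
    cases i with
    | inl i =>
      cases j with
      | inl j =>
        simp [hM, Matrix.submatrix_apply, finSumFinEquiv, bidx, Fin.castAdd, Fin.castLE,
          i.isLt, j.isLt, hA₀]
      | inr j =>
        have : ¬ ((finSumFinEquiv (Sum.inr j) : Fin (k+1)) : ℕ) < k := by
          simp [finSumFinEquiv, Fin.natAdd]
        simp [hM, Matrix.submatrix_apply, finSumFinEquiv, bidx, Fin.castAdd, Fin.castLE,
          i.isLt, Fin.natAdd]
    | inr i =>
      have hi : ¬ ((finSumFinEquiv (Sum.inr i) : Fin (k+1)) : ℕ) < k := by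
        simp [finSumFinEquiv, Fin.natAdd]
      cases j with
      | inl j =>
        simp [hM, Matrix.submatrix_apply, finSumFinEquiv, bidx, Fin.castAdd, Fin.castLE,
          j.isLt, Fin.natAdd]
      | inr j =>
        simp [hM, Matrix.submatrix_apply, finSumFinEquiv, bidx, Fin.castLE, Fin.natAdd]
  have : Invertible A₀ := A₀.invertibleOfIsUnitDet h0
  rw [hdet, hblocks, Matrix.det_fromBlocks₁₁]
  congr 1
  rw [Matrix.det_fin_one]
  simp [Matrix.sub_apply, Matrix.mul_apply, Matrix.invOf_eq_nonsing_inv, dotProduct,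
    Matrix.mulVec, dotProduct, Finset.mul_sum, mul_comm, mul_assoc]
  rw [Finset.sum_comm]
  exact Finset.sum_congr rfl fun i _ => Finset.sum_congr rfl fun j _ => by ring
end

section
/- Let A be an n×n matrix over a commutative ring, let I = (i₁<…<i_k) and J = (j₁<…<j_k) be index lists, and let A₀ = A[I,J] be the corresponding k×k submatrix. Let σ be a permutation moving rows I to positions 1,…,k and columns J to positions 1,…,k. Then the Sylvester identity holds with respect to A[I,J]: (det A[I,J])^{n−k−1} · det A = ± det Ĉ, where ĉ_{pq} (p ∈ I', q ∈ J') is the bordered determinant of A[I,J] with row p and column q of A, and the sign is determined by the permutations of rows and columns. -/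
open Matrix

lemma sylvester_key {R : Type*} [CommRing R] {k m : ℕ}
    (A : Matrix (Fin k) (Fin k) R) (B : Matrix (Fin k) (Fin m) R)
    (C : Matrix (Fin m) (Fin k) R) (D : Matrix (Fin m) (Fin m) R) :
    (fromBlocks A B C D).det * (A.det ^ (k - 1) * A.det ^ m) =
      A.det ^ k * (A.det • D - C * A.adjugate * B).det := by
  have h1 : A * A.adjugate + B * (0 : Matrix (Fin m) (Fin k) R) = A.det • (1 : Matrix (Fin k) (Fin k) R) := by
    rw [Matrix.mul_zero, add_zero, Matrix.mul_adjugate]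
  have h2 : A * -(A.adjugate * B) + B * (A.det • (1 : Matrix (Fin m) (Fin m) R)) = 0 := by
    rw [Matrix.mul_neg, ← Matrix.mul_assoc, Matrix.mul_adjugate, Matrix.mul_smul,
      Matrix.smul_mul, Matrix.one_mul, Matrix.mul_one, neg_add_cancel]
  have h3 : C * A.adjugate + D * (0 : Matrix (Fin m) (Fin k) R) = C * A.adjugate := by
    rw [Matrix.mul_zero, add_zero]
  have h4 : C * -(A.adjugate * B) + D * (A.det • (1 : Matrix (Fin m) (Fin m) R)) =
      A.det • D - C * A.adjugate * B := by
    rw [Matrix.mul_neg, ← Matrix.mul_assoc, Matrix.mul_smul, Matrix.mul_one]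
    abel
  have hmul : fromBlocks A B C D *
      fromBlocks A.adjugate (-(A.adjugate * B)) 0 (A.det • (1 : Matrix (Fin m) (Fin m) R)) =
      fromBlocks (A.det • (1 : Matrix (Fin k) (Fin k) R)) 0 (C * A.adjugate)
        (A.det • D - C * A.adjugate * B) := by
    rw [fromBlocks_multiply, h1, h2, h3, h4]
  have := congrArg Matrix.det hmul
  rw [Matrix.det_mul, Matrix.det_fromBlocks_zero₂₁, Matrix.det_fromBlocks_zero₁₂,
    Matrix.det_adjugate, Matrix.smul_one_eq_diagonal, Matrix.det_diagonal,
    Matrix.smul_one_eq_diagonal, Matrix.det_diagonal] at this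
  simpa [Finset.prod_const, mul_assoc, mul_comm, mul_left_comm] using this

lemma sylvester_core {k m : ℕ} (hk : 1 ≤ k) (hm : 1 ≤ m) {R : Type*} [CommRing R]
    (A : Matrix (Fin k) (Fin k) R) (B : Matrix (Fin k) (Fin m) R)
    (C : Matrix (Fin m) (Fin k) R) (D : Matrix (Fin m) (Fin m) R) :
    A.det ^ (m - 1) * (fromBlocks A B C D).det =
      (A.det • D - C * A.adjugate * B).det := by
  classical
  let σ := (Fin k ⊕ Fin m) × (Fin k ⊕ Fin m)
  let P := MvPolynomial σ ℤ
  let gA : Matrix (Fin k) (Fin k) P := of fun i j => MvPolynomial.X (Sum.inl i, Sum.inl j)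
  let gB : Matrix (Fin k) (Fin m) P := of fun i j => MvPolynomial.X (Sum.inl i, Sum.inr j)
  let gC : Matrix (Fin m) (Fin k) P := of fun i j => MvPolynomial.X (Sum.inr i, Sum.inl j)
  let gD : Matrix (Fin m) (Fin m) P := of fun i j => MvPolynomial.X (Sum.inr i, Sum.inr j)
  -- generic determinant is nonzero
  have hdne : gA.det ≠ 0 := by
    intro h
    have h1 : gA.map (MvPolynomial.eval fun s : σ => if s.1 = s.2 then (1 : ℤ) else 0)
        = (1 : Matrix (Fin k) (Fin k) ℤ) := by
      ext i j
      simp [gA, Matrix.one_apply, Sum.inl.injEq]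
    have h2 := congrArg (MvPolynomial.eval fun s : σ => if s.1 = s.2 then (1 : ℤ) else 0) h
    rw [RingHom.map_det] at h2
    simp only [RingHom.mapMatrix_apply] at h2
    rw [h1] at h2
    simp at h2
  -- generic identity, by cancellation in the domain P
  have hgen : gA.det ^ (m - 1) * (fromBlocks gA gB gC gD).det =
      (gA.det • gD - gC * gA.adjugate * gB).det := by
    have key := sylvester_key gA gB gC gD
    have hc : gA.det ^ k ≠ 0 := pow_ne_zero _ hdne
    apply mul_left_cancel₀ hc
    have he : k + (m - 1) = (k - 1) + m := by omega
    calc gA.det ^ k * (gA.det ^ (m - 1) * (fromBlocks gA gB gC gD).det)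
        = gA.det ^ (k + (m - 1)) * (fromBlocks gA gB gC gD).det := by ring
      _ = gA.det ^ ((k - 1) + m) * (fromBlocks gA gB gC gD).det := by rw [he]
      _ = (fromBlocks gA gB gC gD).det * (gA.det ^ (k - 1) * gA.det ^ m) := by ring
      _ = gA.det ^ k * (gA.det • gD - gC * gA.adjugate * gB).det := key
  -- specialize via evaluation
  let φ : P →+* R := MvPolynomial.eval₂Hom (Int.castRingHom R)
    fun s : σ => fromBlocks A B C D s.1 s.2
  have hφA : gA.map φ = A := by
    ext i j
    show φ (MvPolynomial.X (Sum.inl i, Sum.inl j)) = A i j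
    rw [MvPolynomial.eval₂Hom_X']
    simp [fromBlocks]
  have hφB : gB.map φ = B := by
    ext i j
    show φ (MvPolynomial.X (Sum.inl i, Sum.inr j)) = B i j
    rw [MvPolynomial.eval₂Hom_X']
    simp [fromBlocks]
  have hφC : gC.map φ = C := by
    ext i j
    show φ (MvPolynomial.X (Sum.inr i, Sum.inl j)) = C i j
    rw [MvPolynomial.eval₂Hom_X']
    simp [fromBlocks]
  have hφD : gD.map φ = D := by
    ext i j
    show φ (MvPolynomial.X (Sum.inr i, Sum.inr j)) = D i j
    rw [MvPolynomial.eval₂Hom_X']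
    simp [fromBlocks]
  have hmapRHS : (gA.det • gD - gC * gA.adjugate * gB).map φ
      = φ gA.det • gD.map φ - gC.map φ * (gA.adjugate).map φ * gB.map φ := by
    ext p q
    simp [Matrix.map_apply, Matrix.sub_apply, Matrix.smul_apply, Matrix.mul_apply,
      map_sub, _root_.map_mul, map_sum, smul_eq_mul, Finset.mul_sum]
  have hadj : (gA.adjugate).map φ = A.adjugate := by
    have := RingHom.map_adjugate φ gA
    simp only [RingHom.mapMatrix_apply] at this
    rw [this, hφA]
  have hφd : φ gA.det = A.det := by
    rw [RingHom.map_det]; simp only [RingHom.mapMatrix_apply]; rw [hφA]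
  have hφF : φ (fromBlocks gA gB gC gD).det = (fromBlocks A B C D).det := by
    rw [RingHom.map_det]
    simp only [RingHom.mapMatrix_apply]
    rw [Matrix.fromBlocks_map, hφA, hφB, hφC, hφD]
  have := congrArg φ hgen
  rw [_root_.map_mul, map_pow, hφd, hφF, RingHom.map_det] at this
  simp only [RingHom.mapMatrix_apply] at this
  rw [hmapRHS, hφd, hφB, hφC, hφD, hadj] at this
  exact this

/-- Generalized Sylvester identity with an arbitrary pivot block `A[I,J]`:
`(det A[I,J])^(n-k-1) · det A = ± det Ĉ`, where the sign is the product of the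
signs of the row and column permutations bringing `I`, `J` to leading position,
and `ĉ_{pq}` (for `p ∈ I'`, `q ∈ J'`) is the bordered determinant of `A[I,J]`
with row `p` and column `q`. -/
theorem sylvester_identity_general {R : Type*} [CommRing R] {n k : ℕ}
    (hk1 : 1 ≤ k) (hk : k ≤ n) (hkn : k ≤ n - 1)
    (A : Matrix (Fin n) (Fin n) R)
    (hadd : n = k + (n - k))
    (I J : Fin k → Fin n) (hI : StrictMono I) (hJ : StrictMono J)
    (I' J' : Fin (n - k) → Fin n) (hI' : StrictMono I') (hJ' : StrictMono J')
    -- `I'` and `J'` are the complementary index lists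
    (hIc : ∀ m : Fin n, (∃ i, I i = m) ↔ ¬ ∃ i, I' i = m)
    (hJc : ∀ m : Fin n, (∃ j, J j = m) ↔ ¬ ∃ j, J' j = m)
    -- the row and column permutations moving `I`, `J` to the leading positions
    (ρ γ : Equiv.Perm (Fin n))
    (hρ : ∀ m : Fin n, ρ m = Sum.elim I I' (finSumFinEquiv.symm (Fin.cast hadd m)))
    (hγ : ∀ m : Fin n, γ m = Sum.elim J J' (finSumFinEquiv.symm (Fin.cast hadd m))) :
    (Matrix.det (Matrix.of fun i j : Fin k => A (I i) (J j))) ^ (n - k - 1) * A.det =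
      (((Equiv.Perm.sign ρ * Equiv.Perm.sign γ : ℤˣ) : ℤ) : R) *
        Matrix.det (Matrix.of fun p q : Fin (n - k) =>
          Matrix.det (Matrix.of fun i j : Fin (k + 1) =>
            A (if h : (i : ℕ) < k then I ⟨i, h⟩ else I' p)
              (if h : (j : ℕ) < k then J ⟨j, h⟩ else J' q))) := by
  classical
  have hm : 1 ≤ n - k := by omega
  let e : Fin k ⊕ Fin (n - k) ≃ Fin n := finSumFinEquiv.trans (finCongr hadd.symm)
  have he : ∀ s : Fin k ⊕ Fin (n - k), finSumFinEquiv.symm (Fin.cast hadd (e s)) = s := by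
    intro s
    have h : Fin.cast hadd (e s) = finSumFinEquiv s := by
      apply Fin.ext; simp [e]
    rw [h, Equiv.symm_apply_apply]
  have hρ' : ∀ s, ρ (e s) = Sum.elim I I' s := fun s => by rw [hρ, he]
  have hγ' : ∀ s, γ (e s) = Sum.elim J J' s := fun s => by rw [hγ, he]
  let A0 : Matrix (Fin k) (Fin k) R := of fun i j => A (I i) (J j)
  let B0 : Matrix (Fin k) (Fin (n - k)) R := of fun i q => A (I i) (J' q)
  let C0 : Matrix (Fin (n - k)) (Fin k) R := of fun p j => A (I' p) (J j)
  let D0 : Matrix (Fin (n - k)) (Fin (n - k)) R := of fun p q => A (I' p) (J' q)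
  have hblock : (A.submatrix ρ γ).submatrix e e = fromBlocks A0 B0 C0 D0 := by
    ext s t
    cases s <;> cases t <;>
      simp [Matrix.submatrix_apply, hρ', hγ', fromBlocks, A0, B0, C0, D0]
  set s1 : R := ((Equiv.Perm.sign ρ : ℤ) : R) with hs1
  set s2 : R := ((Equiv.Perm.sign γ : ℤ) : R) with hs2
  have hdetFB : (fromBlocks A0 B0 C0 D0).det = s1 * (s2 * A.det) := by
    rw [← hblock, det_submatrix_equiv_self]
    have h : A.submatrix ρ γ = (A.submatrix id γ).submatrix ρ id := by
      rw [Matrix.submatrix_submatrix]; rfl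
    rw [h, Matrix.det_permute, Matrix.det_permute']
  have hsplit : ∀ i : Fin (k + 1), (finSumFinEquiv.symm i : Fin k ⊕ Fin 1) =
      if h : (i : ℕ) < k then Sum.inl ⟨i, h⟩ else Sum.inr 0 := by
    intro i
    rw [Equiv.symm_apply_eq]
    split_ifs with h
    · apply Fin.ext; simp
    · apply Fin.ext; simp; omega
  have hChat : (Matrix.of fun p q : Fin (n - k) =>
      Matrix.det (Matrix.of fun i j : Fin (k + 1) =>
        A (if h : (i : ℕ) < k then I ⟨i, h⟩ else I' p)
          (if h : (j : ℕ) < k then J ⟨j, h⟩ else J' q)))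
      = A0.det • D0 - C0 * A0.adjugate * B0 := by
    ext p q
    let Bc : Matrix (Fin k) (Fin 1) R := of fun i _ => A (I i) (J' q)
    let Cr : Matrix (Fin 1) (Fin k) R := of fun _ j => A (I' p) (J j)
    let Dd : Matrix (Fin 1) (Fin 1) R := of fun _ _ => A (I' p) (J' q)
    have hin : (Matrix.of fun i j : Fin (k + 1) =>
        A (if h : (i : ℕ) < k then I ⟨i, h⟩ else I' p)
          (if h : (j : ℕ) < k then J ⟨j, h⟩ else J' q))
        = (fromBlocks A0 Bc Cr Dd).submatrix (fun i => finSumFinEquiv.symm i)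
            (fun j => finSumFinEquiv.symm j) := by
      ext i j
      rw [Matrix.submatrix_apply, hsplit i, hsplit j]
      split_ifs <;> simp [*, fromBlocks, A0, Bc, Cr, Dd]
    rw [Matrix.of_apply, hin]
    rw [show ((fromBlocks A0 Bc Cr Dd).submatrix (fun i => finSumFinEquiv.symm i)
        (fun j => finSumFinEquiv.symm j)).det = (fromBlocks A0 Bc Cr Dd).det from
      det_submatrix_equiv_self finSumFinEquiv.symm _]
    have hc := sylvester_core hk1 (le_refl 1) A0 Bc Cr Dd
    rw [pow_zero, one_mul] at hc
    rw [hc, Matrix.det_fin_one]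
    simp [Matrix.sub_apply, Matrix.smul_apply, Matrix.mul_apply, A0, B0, C0, D0,
      Bc, Cr, Dd, smul_eq_mul]
  have core := sylvester_core hk1 hm A0 B0 C0 D0
  have hsgn : (((Equiv.Perm.sign ρ * Equiv.Perm.sign γ : ℤˣ) : ℤ) : R) = s1 * s2 := by
    rw [hs1, hs2]; push_cast; ring
  have hu1 : s1 * s1 = 1 := by
    rw [hs1, ← Int.cast_mul, ← Units.val_mul, Int.units_mul_self]; norm_num
  have hu2 : s2 * s2 = 1 := by
    rw [hs2, ← Int.cast_mul, ← Units.val_mul, Int.units_mul_self]; norm_num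
  show A0.det ^ (n - k - 1) * A.det = _
  rw [hChat, hsgn, ← core, hdetFB]
  calc A0.det ^ (n - k - 1) * A.det
      = (s1 * s1) * ((s2 * s2) * (A0.det ^ (n - k - 1) * A.det)) := by
        rw [hu1, hu2]; ring
    _ = s1 * s2 * (A0.det ^ (n - k - 1) * (s1 * (s2 * A.det))) := by ring
end
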